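/- arXiv:2105.10380 — 2 statements merged into one kernel-verified Lean document; each statement's English description precedes it below -/
import Mathlib

section
/- Let G be a second countable locally compact group, π a unitary representation of G on a separable complex Hilbert space H, and c ∈ Z¹(G,π) an almost coboundary. Then there exists an adapted probability measure μ on G such that c ∈ Z¹_μ(G,π) and c belongs to the closure of B¹(G,π) inside Z¹_μ(G,π) for the L²(G,μ;H)-norm. -/
noncomputable section

open MeasureTheory Filter Topology Pointwise

namespace Evan

variable {𝕜 : Type} [RCLike 𝕜]
variable {G : Type} [Group G] [TopologicalSpace G] [IsTopologicalGroup G]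
variable {H : Type} [NormedAddCommGroup H] [InnerProductSpace 𝕜 H] [CompleteSpace H]

/-- A continuous unitary (orthogonal, when `𝕜 = ℝ`) representation of `G` on `H`:
a homomorphism into the unitary group which is continuous for the topology
of pointwise norm convergence. -/
structure IsUnitaryRep (π : G →* (H →L[𝕜] H)) : Prop where
  mem_unitary : ∀ g, π g ∈ unitary (H →L[𝕜] H)
  cont : ∀ ξ : H, Continuous fun g => π g ξ

/-- The commutant `π(G)'` of a representation. -/
def commutant (π : G →* (H →L[𝕜] H)) : Set (H →L[𝕜] H) :=
  {T | ∀ g, T * π g = π g * T}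

/-- The bicommutant `π(G)''`, i.e. the von Neumann algebra generated by `π(G)`. -/
def bicommutant (π : G →* (H →L[𝕜] H)) : Set (H →L[𝕜] H) :=
  Set.centralizer (commutant π)

/-- Closure of a set of operators in the weak operator topology. -/
def wotClosure (𝕜 : Type) {H : Type} [RCLike 𝕜] [NormedAddCommGroup H]
    [InnerProductSpace 𝕜 H] (S : Set (H →L[𝕜] H)) : Set (H →L[𝕜] H) :=
  (ContinuousLinearMapWOT.ofCLM : (H →L[𝕜] H) → (H →WOT[𝕜] H)) ⁻¹' closure ((ContinuousLinearMapWOT.ofCLM : (H →L[𝕜] H) → (H →WOT[𝕜] H)) '' S)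

/-- A continuous `1`-cocycle for the representation `π`. -/
def IsCocycle (π : G →* (H →L[𝕜] H)) (c : G → H) : Prop :=
  Continuous c ∧ ∀ g h : G, c (g * h) = c g + π g (c h)

/-- A coboundary: `c g = ξ - π g ξ` for some `ξ`. -/
def IsCoboundary (π : G →* (H →L[𝕜] H)) (c : G → H) : Prop :=
  ∃ ξ : H, ∀ g : G, c g = ξ - π g ξ

/-- `c` is an almost coboundary: it lies in the closure of the set of coboundaries for
the topology of uniform convergence on compact subsets of `G`. -/
def IsAlmostCoboundary (π : G →* (H →L[𝕜] H)) (c : G → H) : Prop :=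
  ∀ Q : Set G, IsCompact Q → ∀ ε : ℝ, 0 < ε → ∃ ξ : H, ∀ g ∈ Q, ‖c g - (ξ - π g ξ)‖ ≤ ε

/-- The reduction ideal `I(c) = {T ∈ π(G)' : T·c ∈ B¹(G,π)}`. -/
def reductionIdeal (π : G →* (H →L[𝕜] H)) (c : G → H) : Set (H →L[𝕜] H) :=
  {T | T ∈ commutant π ∧ IsCoboundary π fun g => T (c g)}

/-- `c` is evanescent: `I(c)` is dense in `π(G)'` for the weak operator topology. -/
def IsEvanescent (π : G →* (H →L[𝕜] H)) (c : G → H) : Prop :=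
  commutant π ⊆ wotClosure 𝕜 (reductionIdeal π c)

/-- `c` is irreducible: `I(c) = {0}`. -/
def IsIrreducibleCocycle (π : G →* (H →L[𝕜] H)) (c : G → H) : Prop :=
  reductionIdeal π c = {0}

/-- `π` has almost invariant vectors. -/
def HasAlmostInvariantVectors (π : G →* (H →L[𝕜] H)) : Prop :=
  ∀ Q : Set G, IsCompact Q → ∀ ε : ℝ, 0 < ε →
    ∃ ξ : H, ‖ξ‖ = 1 ∧ ∀ g ∈ Q, ‖π g ξ - ξ‖ ≤ ε

/-- `π` is irreducible: the only closed invariant subspaces are `⊥` and `⊤`. -/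
def IsIrreducibleRep (π : G →* (H →L[𝕜] H)) : Prop :=
  ∀ K : Submodule 𝕜 H, IsClosed (K : Set H) → (∀ g : G, ∀ x ∈ K, π g x ∈ K) →
    K = ⊥ ∨ K = ⊤

/-- A projection: a self-adjoint idempotent. -/
def IsProjection (p : H →L[𝕜] H) : Prop :=
  IsSelfAdjoint p ∧ p * p = p

/-- The reduction ideal of the projected cocycle `p·c`, viewed as a cocycle for the
subrepresentation of `π` on `pH`, whose commutant is identified with the corner
`p π(G)' p` (a von Neumann algebra with unit `p`). -/
def projReductionIdeal (π : G →* (H →L[𝕜] H)) (c : G → H) (p : H →L[𝕜] H) :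
    Set (H →L[𝕜] H) :=
  {T | T ∈ commutant π ∧ p * T = T ∧ T * p = T ∧
    ∃ ξ : H, p ξ = ξ ∧ ∀ g : G, T (c g) = ξ - π g ξ}

/-- The projected cocycle `p·c` is evanescent: its reduction ideal is dense, in the weak
operator topology, in the commutant of the subrepresentation on `pH` (the corner
`p π(G)' p`). -/
def ProjIsEvanescent (π : G →* (H →L[𝕜] H)) (c : G → H) (p : H →L[𝕜] H) : Prop :=
  {T | T ∈ commutant π ∧ p * T = T ∧ T * p = T} ⊆
    wotClosure 𝕜 (projReductionIdeal π c p)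

/-- The projected cocycle `p·c` is irreducible: its reduction ideal is `{0}`. -/
def ProjIsIrreducible (π : G →* (H →L[𝕜] H)) (c : G → H) (p : H →L[𝕜] H) : Prop :=
  projReductionIdeal π c p = {0}

/-- `G` is weak identity excluding (WIE): every irreducible unitary representation of `G`
on a separable complex Hilbert space that has almost invariant vectors is trivial. -/
def IsWIE (G : Type) [Group G] [TopologicalSpace G] [IsTopologicalGroup G] : Prop :=
  ∀ (H : Type) (_ : NormedAddCommGroup H) (_ : InnerProductSpace ℂ H)
    (_ : CompleteSpace H) (_ : TopologicalSpace.SeparableSpace H)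
    (π : G →* (H →L[ℂ] H)), IsUnitaryRep π → IsIrreducibleRep π →
      HasAlmostInvariantVectors π → ∀ g : G, π g = 1

/-- The support of a measure on a topological space: the set of points all of whose
open neighbourhoods have positive measure. -/
def measSupport {G : Type} [TopologicalSpace G] [MeasurableSpace G] (μ : Measure G) :
    Set G :=
  {g | ∀ U : Set G, IsOpen U → g ∈ U → 0 < μ U}

/-- An adapted probability measure on `G`: symmetric, absolutely continuous with respect
to the Haar measure, and whose support generates `G`. -/
structure IsAdapted {G : Type} [Group G] [TopologicalSpace G] [IsTopologicalGroup G]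
    [LocallyCompactSpace G] [MeasurableSpace G] [BorelSpace G] (μ : Measure G) :
    Prop where
  prob : IsProbabilityMeasure μ
  symmetric : μ.inv = μ
  absCont : μ ≪ MeasureTheory.Measure.haar
  generates : Subgroup.closure (measSupport μ) = ⊤

/-- The word-length function associated to a generating set `S`. -/
def wordLength {G : Type} [Group G] (S : Set G) (g : G) : ℕ :=
  sInf {n : ℕ | g ∈ (S ∪ S⁻¹ ∪ {1}) ^ n}

/-- `μ` has a second moment with respect to some compact generating set of `G`. -/
def HasSecondMoment {G : Type} [Group G] [TopologicalSpace G] [MeasurableSpace G]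
    (μ : Measure G) : Prop :=
  ∃ S : Set G, IsCompact S ∧ Subgroup.closure S = ⊤ ∧
    Integrable (fun g => (wordLength S g : ℝ) ^ 2) μ

end Evan

/-!
The errors `uₙ = c - ∂ξₙ` of coboundaries approximating `c` uniformly on a compact exhaustion
tend to `0` pointwise, so `F = ‖c‖² + (supₙ ‖uₙ‖)²` is finite everywhere. An everywhere finite `F`
is integrable for a probability measure equivalent to Haar measure: give a finite measure
equivalent to Haar measure the density `(1 + F)⁻¹` and normalise. Averaging it with its image
under inversion (and integrating `F + F ∘ inv` instead of `F`) makes it symmetric; being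
equivalent to Haar measure it has full support. Dominated convergence with bound `F` then gives
`∫ ‖uₙ‖² dμ → 0`.
-/

open Set
open scoped ENNReal

theorem iSup_enorm_ne_top_of_tendsto {E : Type*} [SeminormedAddCommGroup E] {u : ℕ → E} {a : E}
    (hu : Tendsto u atTop (𝓝 a)) : ⨆ n, ‖u n‖ₑ ≠ ∞ := by
  obtain ⟨C, hC⟩ := isBounded_iff_forall_norm_le.1 (Metric.isBounded_range_of_tendsto u hu)
  refine ne_top_of_le_ne_top (ENNReal.ofReal_ne_top (r := C)) (iSup_le fun n => ?_)
  rw [← ofReal_norm]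
  exact ENNReal.ofReal_le_ofReal (hC _ (mem_range_self n))

namespace MeasureTheory

theorem Measure.exists_isProbabilityMeasure_lintegral_lt_top {X : Type*} [MeasurableSpace X]
    (m : Measure X) [SFinite m] [NeZero m] {F : X → ℝ≥0∞} (hF : Measurable F)
    (hF_ne_top : ∀ x, F x ≠ ∞) :
    ∃ ν : Measure X, IsProbabilityMeasure ν ∧ ν ≪ m ∧ m ≪ ν ∧ ∫⁻ x, F x ∂ν < ∞ := by
  have h_one_add_ne_top : ∀ x, 1 + F x ≠ ∞ := fun x =>
    ENNReal.add_ne_top.2 ⟨ENNReal.one_ne_top, hF_ne_top x⟩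
  have hw : Measurable fun x => (1 + F x)⁻¹ := (measurable_const.add hF).inv
  set ν : Measure X := m.toFinite.withDensity fun x => (1 + F x)⁻¹
  have hν_m : ν ≪ m :=
    (withDensity_absolutelyContinuous _ _).trans (toFinite_absolutelyContinuous m)
  have hm_ν : m ≪ ν := (absolutelyContinuous_toFinite m).trans <|
    withDensity_absolutelyContinuous' hw.aemeasurable <|
      ae_of_all _ fun x => ENNReal.inv_ne_zero.2 (h_one_add_ne_top x)
  have hν_univ : ν univ ≤ 1 := by
    rw [withDensity_apply _ MeasurableSet.univ, Measure.restrict_univ]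
    calc ∫⁻ x, (1 + F x)⁻¹ ∂m.toFinite ≤ ∫⁻ _, 1 ∂m.toFinite :=
          lintegral_mono fun x => ENNReal.inv_le_one.2 le_self_add
      _ = 1 := by simp
  have hF_ν : ∫⁻ x, F x ∂ν ≤ 1 := by
    rw [lintegral_withDensity_eq_lintegral_mul _ hw hF]
    calc ∫⁻ x, (1 + F x)⁻¹ * F x ∂m.toFinite ≤ ∫⁻ _, 1 ∂m.toFinite :=
          lintegral_mono fun x =>
            (ENNReal.inv_mul_le_iff (by simp) (h_one_add_ne_top x)).2 (by simp)
      _ = 1 := by simp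
  have : IsFiniteMeasure ν := ⟨hν_univ.trans_lt ENNReal.one_lt_top⟩
  have : NeZero ν :=
    ⟨fun h => NeZero.ne m (Measure.measure_univ_eq_zero.1 (hm_ν (by simp [h])))⟩
  refine ⟨(ν univ)⁻¹ • ν, isProbabilityMeasureSMul, hν_m.smul_left _,
    hm_ν.trans (absolutelyContinuous_smul (ENNReal.inv_ne_zero.2 (measure_ne_top ν univ))), ?_⟩
  rw [lintegral_smul_measure, smul_eq_mul]
  exact ENNReal.mul_lt_top (ENNReal.inv_lt_top.2 (measure_univ_pos.2 (NeZero.ne ν)))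
    (hF_ν.trans_lt ENNReal.one_lt_top)

variable {X E : Type*} [MeasurableSpace X] {μ : Measure X} [NormedAddCommGroup E]

theorem memLp_two_of_lintegral_enorm_sq_lt_top {f : X → E} (hf : AEStronglyMeasurable f μ)
    (h : ∫⁻ x, ‖f x‖ₑ ^ 2 ∂μ < ∞) : MemLp f 2 μ :=
  ⟨hf, (eLpNorm_lt_top_iff_lintegral_rpow_enorm_lt_top two_ne_zero ENNReal.ofNat_ne_top).2
    (by simpa using h)⟩

theorem integral_norm_sq_eq_toReal_lintegral {f : X → E} (hf : AEStronglyMeasurable f μ) :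
    ∫ x, ‖f x‖ ^ 2 ∂μ = (∫⁻ x, ‖f x‖ₑ ^ 2 ∂μ).toReal := by
  rw [integral_eq_lintegral_of_nonneg_ae (f := fun x => ‖f x‖ ^ 2)
    (ae_of_all _ fun x => by positivity) (hf.norm.pow 2)]
  simp [← ofReal_norm, ENNReal.ofReal_pow]

theorem tendsto_integral_norm_sq_of_dominated {u : ℕ → X → E}
    (hu : ∀ n, AEStronglyMeasurable (u n) μ) (h_bound : ∫⁻ x, (⨆ n, ‖u n x‖ₑ) ^ 2 ∂μ ≠ ∞)
    (h_lim : ∀ᵐ x ∂μ, Tendsto (fun n => u n x) atTop (𝓝 0)) :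
    Tendsto (fun n => ∫ x, ‖u n x‖ ^ 2 ∂μ) atTop (𝓝 0) := by
  have h_lint : Tendsto (fun n => ∫⁻ x, ‖u n x‖ₑ ^ 2 ∂μ) atTop (𝓝 0) := by
    simpa using tendsto_lintegral_of_dominated_convergence' (f := 0) _
      (fun n => (hu n).enorm.pow_const 2)
      (fun n => ae_of_all _ fun x => pow_le_pow_left' (le_iSup (fun n => ‖u n x‖ₑ) n) 2) h_bound
      (h_lim.mono fun x hx => by
        simpa using ENNReal.Tendsto.pow (n := 2) ((continuous_enorm.tendsto 0).comp hx))
  simpa [integral_norm_sq_eq_toReal_lintegral (hu _), Function.comp_def] using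
    (ENNReal.tendsto_toReal ENNReal.zero_ne_top).comp h_lint

end MeasureTheory

namespace Evan

theorem measSupport_eq_univ {X : Type} [TopologicalSpace X] [MeasurableSpace X] (μ : Measure X)
    [μ.IsOpenPosMeasure] : measSupport μ = univ :=
  eq_univ_of_forall fun _ _ hU hx => hU.measure_pos μ ⟨_, hx⟩

section Adapted

variable {G : Type} [Group G] [TopologicalSpace G] [IsTopologicalGroup G] [LocallyCompactSpace G]
  [MeasurableSpace G] [BorelSpace G]

open Measure

theorem isAdapted_of_absolutelyContinuous (μ : Measure G) [IsProbabilityMeasure μ]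
    (h_symm : μ.inv = μ) (hμ : μ ≪ haar) (h_haar : haar ≪ μ) : IsAdapted μ where
  prob := inferInstance
  symmetric := h_symm
  absCont := hμ
  generates := by
    have := h_haar.isOpenPosMeasure
    rw [measSupport_eq_univ, Subgroup.closure_univ]

theorem exists_isAdapted_lintegral_lt_top [SecondCountableTopology G] {F : G → ℝ≥0∞}
    (hF : Measurable F) (hF_ne_top : ∀ g, F g ≠ ∞) :
    ∃ μ : Measure G, IsAdapted μ ∧ ∫⁻ g, F g ∂μ < ∞ := by
  obtain ⟨ν, hν, hν_haar, h_haar_ν, hFν⟩ :=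
    (haar : Measure G).exists_isProbabilityMeasure_lintegral_lt_top (F := fun g => F g + F g⁻¹)
      (hF.add (hF.comp measurable_inv)) fun g => ENNReal.add_ne_top.2 ⟨hF_ne_top g, hF_ne_top g⁻¹⟩
  have hν_inv_haar : ν.inv ≪ haar :=
    (hν_haar.map measurable_inv).trans (inv_absolutelyContinuous _)
  have hFν_inv : ∫⁻ g, F g ∂ν.inv = ∫⁻ g, F g⁻¹ ∂ν := by
    rw [inv_def, lintegral_map hF measurable_inv]
  set μ : Measure G := (2 : ℝ≥0∞)⁻¹ • (ν + ν.inv)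
  have : IsProbabilityMeasure μ := ⟨by simp [μ, inv_apply, ENNReal.inv_two_add_inv_two]⟩
  refine ⟨μ, isAdapted_of_absolutelyContinuous μ ?_ ?_ ?_, ?_⟩
  · ext s
    simp only [μ, inv_apply, Measure.smul_apply, Measure.add_apply, inv_inv, add_comm]
  · exact (hν_haar.add_left hν_inv_haar).smul_left _
  · exact h_haar_ν.trans
      ((AbsolutelyContinuous.rfl.add_right _).trans (absolutelyContinuous_smul (by simp)))
  · rw [lintegral_smul_measure, lintegral_add_measure, hFν_inv, ← lintegral_add_left hF]
    exact ENNReal.mul_lt_top (by simp) hFν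

end Adapted

theorem IsAlmostCoboundary.exists_tendsto_pointwise {𝕜 : Type} [RCLike 𝕜] {G : Type} [Group G]
    [TopologicalSpace G] [SigmaCompactSpace G] {H : Type} [NormedAddCommGroup H]
    [InnerProductSpace 𝕜 H] {π : G →* (H →L[𝕜] H)} {c : G → H} (hac : IsAlmostCoboundary π c) :
    ∃ ξ : ℕ → H, ∀ g, Tendsto (fun n => c g - (ξ n - π g (ξ n))) atTop (𝓝 0) := by
  choose ξ hξ using fun n : ℕ => hac (compactCovering G n) (isCompact_compactCovering G n)
    (1 / (n + 1)) Nat.one_div_pos_of_nat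
  refine ⟨ξ, fun g => ?_⟩
  obtain ⟨N, hN⟩ := exists_mem_compactCovering g
  refine squeeze_zero_norm' ?_ tendsto_one_div_add_atTop_nhds_zero_nat
  filter_upwards [eventually_ge_atTop N] with n hn
  exact hξ n g (compactCovering_subset G hn hN)

theorem almostCoboundary_L2_approximation_general
    (G : Type) [Group G] [TopologicalSpace G] [IsTopologicalGroup G]
    [LocallyCompactSpace G] [SecondCountableTopology G]
    [MeasurableSpace G] [BorelSpace G]
    (H : Type) [NormedAddCommGroup H] [InnerProductSpace ℂ H] [CompleteSpace H]
    (π : G →* (H →L[ℂ] H)) (hπ : IsUnitaryRep π)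
    (c : G → H) (hc : IsCocycle π c) (hac : IsAlmostCoboundary π c) :
    ∃ μ : Measure G, IsAdapted μ ∧ MemLp c 2 μ ∧
      ∀ ε : ℝ, 0 < ε → ∃ ξ : H, (∫ g, ‖c g - (ξ - π g ξ)‖ ^ 2 ∂μ) < ε ^ 2 := by
  obtain ⟨ξ, hξ⟩ := hac.exists_tendsto_pointwise
  set u : ℕ → G → H := fun n g => c g - (ξ n - π g (ξ n))
  have hu : ∀ n, Continuous (u n) := fun n => hc.1.sub (continuous_const.sub (hπ.cont _))
  obtain ⟨μ, hμ, hFμ⟩ := exists_isAdapted_lintegral_lt_top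
    (F := fun g => ‖c g‖ₑ ^ 2 + (⨆ n, ‖u n g‖ₑ) ^ 2)
    ((hc.1.enorm.measurable.pow_const 2).add
      ((Measurable.iSup fun n => (hu n).enorm.measurable).pow_const 2))
    fun g => ENNReal.add_ne_top.2 ⟨ENNReal.pow_ne_top enorm_ne_top,
      ENNReal.pow_ne_top (iSup_enorm_ne_top_of_tendsto (hξ g))⟩
  refine ⟨μ, hμ, memLp_two_of_lintegral_enorm_sq_lt_top hc.1.aestronglyMeasurable
    ((lintegral_mono fun g => le_self_add).trans_lt hFμ), fun ε hε => ?_⟩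
  have h_lim := tendsto_integral_norm_sq_of_dominated (fun n => (hu n).aestronglyMeasurable)
    ((lintegral_mono fun g => le_add_self).trans_lt hFμ).ne (ae_of_all _ hξ)
  obtain ⟨n, hn⟩ := (h_lim.eventually (gt_mem_nhds (pow_pos hε 2))).exists
  exact ⟨ξ n, hn⟩

/-- Every almost coboundary lies in the `L²(μ)`-closure of the
coboundaries for some adapted probability measure `μ`. -/
theorem almostCoboundary_L2_approximation
    (G : Type) [Group G] [TopologicalSpace G] [IsTopologicalGroup G]
    [LocallyCompactSpace G] [SecondCountableTopology G]
    [MeasurableSpace G] [BorelSpace G]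
    (H : Type) [NormedAddCommGroup H] [InnerProductSpace ℂ H] [CompleteSpace H]
    [TopologicalSpace.SeparableSpace H]
    (π : G →* (H →L[ℂ] H)) (hπ : IsUnitaryRep π)
    (c : G → H) (hc : IsCocycle π c) (hac : IsAlmostCoboundary π c) :
    ∃ μ : Measure G, IsAdapted μ ∧ MemLp c 2 μ ∧
      ∀ ε : ℝ, 0 < ε → ∃ ξ : H, (∫ g, ‖c g - (ξ - π g ξ)‖ ^ 2 ∂μ) < ε ^ 2 :=
  almostCoboundary_L2_approximation_general G H π hπ c hc hac

end Evan
end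
end

section
/- Let G be a second countable locally compact group and π a unitary representation of G on a separable complex Hilbert space H such that the set E(G,π) of evanescent cocycles is a submodule of Z¹(G,π) over π(G)' (i.e. it is closed under addition and under the action (T,c) ↦ T·c of π(G)'). Then for every cocycle c ∈ Z¹(G,π) there exists exactly one projection p ∈ π(G)' such that p·c is evanescent and (1−p)·c is irreducible. -/
noncomputable section

open MeasureTheory Filter Topology Pointwise

namespace Evan

variable {𝕜 : Type} [RCLike 𝕜]
variable {G : Type} [Group G] [TopologicalSpace G] [IsTopologicalGroup G]
variable {H : Type} [NormedAddCommGroup H] [InnerProductSpace 𝕜 H] [CompleteSpace H]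

set_option linter.unusedSectionVars false
set_option linter.unusedVariables false
set_option maxHeartbeats 1000000

section AuxEvan

variable {E : Type} [NormedAddCommGroup E] [InnerProductSpace ℂ E] [CompleteSpace E]
variable {π : G →* (E →L[ℂ] E)}

local notation "⟪" x ", " y "⟫" => @inner ℂ _ _ x y

open ContinuousLinearMapWOT in
lemma mem_wotClosure_iff {s : Set (E →L[ℂ] E)} {A : E →L[ℂ] E} :
    A ∈ wotClosure ℂ s ↔ ∀ (Φ : Finset (E × (E →L[ℂ] ℂ))) (ε : ℝ), 0 < ε →
      ∃ B ∈ s, ∀ φ ∈ Φ, ‖φ.2 (A φ.1 - B φ.1)‖ < ε := by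
  unfold wotClosure
  rw [Set.mem_preimage]
  set tA := (ContinuousLinearMapWOT.ofCLM : (E →L[ℂ] E) → (E →WOT[ℂ] E)) A with htA
  have hb := (ContinuousLinearMapWOT.hasBasis_seminorms (𝕜₂ := ℂ) (σ := RingHom.id ℂ) (E := E) (F := E)).map
    (fun z => tA + z)
  rw [map_add_left_nhds_zero] at hb
  rw [mem_closure_iff_nhds_basis hb]
  have happ : ∀ (B : E →L[ℂ] E) (φ : E × (E →L[ℂ] ℂ)),
      (seminormFamily (RingHom.id ℂ) E E) φ ((ContinuousLinearMapWOT.ofCLM : (E →L[ℂ] E) → (E →WOT[ℂ] E)) B - tA)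
        = ‖φ.2 (A φ.1 - B φ.1)‖ := by
    intro B φ
    show ‖φ.2 (((ContinuousLinearMapWOT.ofCLM : (E →L[ℂ] E) → (E →WOT[ℂ] E)) B - tA) φ.1)‖ = _
    rw [ContinuousLinearMapWOT.sub_apply]
    rw [show ((ContinuousLinearMapWOT.ofCLM : (E →L[ℂ] E) → (E →WOT[ℂ] E)) B) φ.1 = B φ.1 from rfl,
      show tA φ.1 = A φ.1 from rfl]
    rw [← norm_neg, ← map_neg, neg_sub]
  constructor
  · intro h Φ ε hε
    obtain ⟨y, hy_mem, hy⟩ := h ((Φ.sup (seminormFamily (RingHom.id ℂ) E E)).ball 0 ε)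
      (SeminormFamily.basisSets_iff _ |>.mpr ⟨Φ, ε, hε, rfl⟩)
    obtain ⟨B, hBs, rfl⟩ := hy_mem
    obtain ⟨z, hz, hzeq⟩ := hy
    simp only [id_eq] at hz
    rw [Seminorm.mem_ball_zero] at hz
    have hzeq' : tA + z = (ContinuousLinearMapWOT.ofCLM : (E →L[ℂ] E) → (E →WOT[ℂ] E)) B := hzeq
    have hzval : z = (ContinuousLinearMapWOT.ofCLM : (E →L[ℂ] E) → (E →WOT[ℂ] E)) B - tA := eq_sub_of_add_eq' hzeq'
    refine ⟨B, hBs, fun φ hφ => ?_⟩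
    rw [← happ B φ, ← hzval]
    exact lt_of_le_of_lt (Seminorm.le_def.mp (Finset.le_sup hφ) z) hz
  · intro h U hU
    obtain ⟨Φ, r, hr, rfl⟩ := (SeminormFamily.basisSets_iff _).mp hU
    obtain ⟨B, hBs, hB⟩ := h Φ r hr
    refine ⟨(ContinuousLinearMapWOT.ofCLM : (E →L[ℂ] E) → (E →WOT[ℂ] E)) B, Set.mem_image_of_mem _ hBs,
      ⟨(ContinuousLinearMapWOT.ofCLM : (E →L[ℂ] E) → (E →WOT[ℂ] E)) B - tA, ?_, by
        show tA + ((ContinuousLinearMapWOT.ofCLM : (E →L[ℂ] E) → (E →WOT[ℂ] E)) B - tA) = (ContinuousLinearMapWOT.ofCLM : (E →L[ℂ] E) → (E →WOT[ℂ] E)) B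
        rw [add_comm]; exact sub_add_cancel _ _⟩⟩
    simp only [id_eq]
    rw [Seminorm.mem_ball_zero]
    refine Seminorm.finset_sup_apply_lt hr fun φ hφ => ?_
    rw [happ B φ]
    exact hB φ hφ


lemma IsUnitaryRep.star_pi (hπ : IsUnitaryRep π) (g : G) : star (π g) = π g⁻¹ := by
  have h1 : star (π g) * π g = 1 := (Unitary.mem_iff.mp (hπ.mem_unitary g)).1
  have h2 : π g * π g⁻¹ = 1 := by rw [← map_mul, mul_inv_cancel, map_one]
  calc star (π g) = star (π g) * (π g * π g⁻¹) := by rw [h2, mul_one]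
  _ = (star (π g) * π g) * π g⁻¹ := (mul_assoc _ _ _).symm
  _ = π g⁻¹ := by rw [h1, one_mul]

namespace commutant

lemma one_mem : (1 : E →L[ℂ] E) ∈ commutant π := fun g => by rw [one_mul, mul_one]

lemma zero_mem : (0 : E →L[ℂ] E) ∈ commutant π := fun g => by rw [zero_mul, mul_zero]

lemma mul_mem {S T : E →L[ℂ] E} (hS : S ∈ commutant π) (hT : T ∈ commutant π) :
    S * T ∈ commutant π := fun g => by
  rw [mul_assoc, hT g, ← mul_assoc, hS g, mul_assoc]

lemma add_mem {S T : E →L[ℂ] E} (hS : S ∈ commutant π) (hT : T ∈ commutant π) :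
    S + T ∈ commutant π := fun g => by rw [add_mul, mul_add, hS g, hT g]

lemma smul_mem (a : ℂ) {T : E →L[ℂ] E} (hT : T ∈ commutant π) :
    a • T ∈ commutant π := fun g => by rw [smul_mul_assoc, mul_smul_comm, hT g]

lemma sub_mem {S T : E →L[ℂ] E} (hS : S ∈ commutant π) (hT : T ∈ commutant π) :
    S - T ∈ commutant π := fun g => by rw [sub_mul, mul_sub, hS g, hT g]

lemma star_mem (hπ : IsUnitaryRep π) {T : E →L[ℂ] E} (hT : T ∈ commutant π) :
    star T ∈ commutant π := by
  intro g
  have hsg : star (π g⁻¹) = π g := by rw [hπ.star_pi g⁻¹, inv_inv]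
  calc star T * π g = star T * star (π g⁻¹) := by rw [hsg]
  _ = star (π g⁻¹ * T) := (star_mul _ _).symm
  _ = star (T * π g⁻¹) := by rw [hT g⁻¹]
  _ = star (π g⁻¹) * star T := star_mul _ _
  _ = π g * star T := by rw [hsg]

lemma apply_commute {T : E →L[ℂ] E} (hT : T ∈ commutant π) (g : G) (ξ : E) :
    T (π g ξ) = π g (T ξ) := by
  have := congrArg (fun S : E →L[ℂ] E => S ξ) (hT g)
  simpa [ContinuousLinearMap.mul_apply] using this

lemma inv_mem {X R : E →L[ℂ] E} (hX : X ∈ commutant π) (h1 : R * X = 1)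
    (h2 : X * R = 1) : R ∈ commutant π := by
  intro g
  calc R * π g = R * π g * (X * R) := by rw [h2, mul_one]
  _ = R * (π g * X) * R := by rw [mul_assoc, mul_assoc, mul_assoc]
  _ = R * (X * π g) * R := by rw [hX g]
  _ = (R * X) * (π g * R) := by rw [mul_assoc, mul_assoc, mul_assoc]
  _ = π g * R := by rw [h1, one_mul]

end commutant

lemma IsCocycle.clm {c : G → E} (hc : IsCocycle π c) {T : E →L[ℂ] E}
    (hT : T ∈ commutant π) : IsCocycle π fun g => T (c g) :=
  ⟨T.continuous.comp hc.1, fun g h => by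
    dsimp only; rw [hc.2 g h, map_add, commutant.apply_commute hT]⟩

lemma IsCoboundary.clm {c : G → E} (hb : IsCoboundary π c) {T : E →L[ℂ] E}
    (hT : T ∈ commutant π) : IsCoboundary π fun g => T (c g) := by
  obtain ⟨ξ, hξ⟩ := hb
  exact ⟨T ξ, fun g => by dsimp only; rw [hξ g, map_sub, commutant.apply_commute hT]⟩


lemma subset_wotClosure (s : Set (E →L[ℂ] E)) : s ⊆ wotClosure ℂ s :=
  fun _ hT => subset_closure (Set.mem_image_of_mem _ hT)

/-- The set of operators in the commutant whose action on `c` gives an evanescent cocycle. -/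
def evanIdeal (π : G →* (E →L[ℂ] E)) (c : G → E) : Set (E →L[ℂ] E) :=
  {T | T ∈ commutant π ∧ IsEvanescent π fun g => T (c g)}

namespace evanIdeal

variable {c : G → E}

lemma coboundary_mem {T : E →L[ℂ] E} (hT : T ∈ commutant π)
    (hb : IsCoboundary π fun g => T (c g)) : T ∈ evanIdeal π c :=
  ⟨hT, fun S hS => subset_wotClosure _ ⟨hS, hb.clm hS⟩⟩

lemma zero_mem : (0 : E →L[ℂ] E) ∈ evanIdeal π c :=
  coboundary_mem commutant.zero_mem ⟨0, fun g => by simp⟩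

lemma reduction_subset {T : E →L[ℂ] E} (hT : T ∈ reductionIdeal π c) : T ∈ evanIdeal π c :=
  coboundary_mem hT.1 hT.2

lemma lmul_mem
    (hsmul : ∀ (T : E →L[ℂ] E) (c : G → E), T ∈ commutant π → IsCocycle π c →
      IsEvanescent π c → IsEvanescent π fun g => T (c g))
    (hc : IsCocycle π c) {S T : E →L[ℂ] E} (hS : S ∈ commutant π)
    (hT : T ∈ evanIdeal π c) : S * T ∈ evanIdeal π c := by
  refine ⟨commutant.mul_mem hS hT.1, ?_⟩
  have := hsmul S _ hS (hc.clm hT.1) hT.2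
  simpa only [ContinuousLinearMap.mul_apply] using this

lemma add_mem
    (hadd : ∀ c₁ c₂ : G → E, IsCocycle π c₁ → IsCocycle π c₂ →
      IsEvanescent π c₁ → IsEvanescent π c₂ → IsEvanescent π fun g => c₁ g + c₂ g)
    (hc : IsCocycle π c) {S T : E →L[ℂ] E}
    (hS : S ∈ evanIdeal π c) (hT : T ∈ evanIdeal π c) : S + T ∈ evanIdeal π c := by
  refine ⟨commutant.add_mem hS.1 hT.1, ?_⟩
  have := hadd _ _ (hc.clm hS.1) (hc.clm hT.1) hS.2 hT.2
  simpa only [ContinuousLinearMap.add_apply] using this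

end evanIdeal

/-- The closed subspace spanned by the ranges of adjoints of elements of the
evanescence ideal. -/
def evanSpace (π : G →* (E →L[ℂ] E)) (c : G → E) : Submodule ℂ E :=
  (Submodule.span ℂ (⋃ T ∈ evanIdeal π c, Set.range ((star T : E →L[ℂ] E) : E → E))).topologicalClosure

instance evanSpace_complete (c : G → E) : CompleteSpace (evanSpace π c) :=
  IsClosed.completeSpace_coe (hs := Submodule.isClosed_topologicalClosure _)

/-- The orthogonal projection onto `evanSpace`. -/
def evanProj (π : G →* (E →L[ℂ] E)) (c : G → E) : E →L[ℂ] E :=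
  (evanSpace π c).subtypeL.comp (Submodule.orthogonalProjection (evanSpace π c))

variable {c : G → E}

lemma star_apply_mem_evanSpace {T : E →L[ℂ] E} (hT : T ∈ evanIdeal π c) (η : E) :
    star T η ∈ evanSpace π c := by
  apply Submodule.le_topologicalClosure
  apply Submodule.subset_span
  exact Set.mem_biUnion hT ⟨η, rfl⟩

lemma evanProj_apply_mem (ξ : E) : evanProj π c ξ ∈ evanSpace π c := by
  exact (Submodule.orthogonalProjection (evanSpace π c) ξ).2

lemma evanProj_eq_self {v : E} (hv : v ∈ evanSpace π c) : evanProj π c v = v := by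
  have h := Submodule.starProjection_eq_self_iff.mpr hv
  show ((Submodule.orthogonalProjection (evanSpace π c) v : evanSpace π c) : E) = v
  exact h

lemma evanProj_isSelfAdjoint : IsSelfAdjoint (evanProj π c) :=
  isSelfAdjoint_starProjection _

lemma evanProj_idem : evanProj π c * evanProj π c = evanProj π c := by
  ext ξ
  simp only [ContinuousLinearMap.mul_apply]
  exact evanProj_eq_self (evanProj_apply_mem ξ)

lemma orthogonal_apply_eq_zero {T : E →L[ℂ] E} (hT : T ∈ evanIdeal π c) {u : E}
    (hu : u ∈ (evanSpace π c)ᗮ) : T u = 0 := by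
  have h : ∀ η : E, (inner ℂ (η : E) (T u) : ℂ) = 0 := by
    intro η
    rw [← ContinuousLinearMap.adjoint_inner_left, ← ContinuousLinearMap.star_eq_adjoint]
    exact (Submodule.mem_orthogonal _ u).mp hu _ (star_apply_mem_evanSpace hT η)
  have := h (T u)
  exact inner_self_eq_zero.mp this

lemma evanIdeal_mul_one_sub_proj {T : E →L[ℂ] E} (hT : T ∈ evanIdeal π c) :
    T * (1 - evanProj π c) = 0 := by
  ext ξ
  have hu : ξ - evanProj π c ξ ∈ (evanSpace π c)ᗮ :=
    Submodule.sub_starProjection_mem_orthogonal ξ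
  simp only [ContinuousLinearMap.mul_apply, ContinuousLinearMap.sub_apply,
    ContinuousLinearMap.one_apply, ContinuousLinearMap.zero_apply]
  exact orthogonal_apply_eq_zero hT hu

lemma pi_maps_evanSpace (hπ : IsUnitaryRep π) (g : G) {v : E} (hv : v ∈ evanSpace π c) :
    π g v ∈ evanSpace π c := by
  set W := ⋃ T ∈ evanIdeal π c, Set.range ((star T : E →L[ℂ] E) : E → E) with hW
  have hsub : Submodule.span ℂ W ≤
      (evanSpace π c).comap ((π g).toLinearMap) := by
    rw [Submodule.span_le]
    rintro w hw
    simp only [hW, Set.mem_iUnion] at hw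
    obtain ⟨T, hT, η, rfl⟩ := hw
    have hstar : star T ∈ commutant π := commutant.star_mem hπ hT.1
    have heq : π g (star T η) = star T (π g η) := (commutant.apply_commute hstar g η).symm
    refine Submodule.mem_comap.mpr ?_
    show π g (star T η) ∈ evanSpace π c
    rw [heq]
    exact star_apply_mem_evanSpace hT (π g η)
  have hclosed : IsClosed (((evanSpace π c).comap ((π g).toLinearMap) : Set E)) := by
    have : (((evanSpace π c).comap ((π g).toLinearMap) : Set E)) = (π g) ⁻¹' (evanSpace π c) := rfl
    rw [this]
    exact (Submodule.isClosed_topologicalClosure _).preimage (π g).continuous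
  exact Submodule.topologicalClosure_minimal _ hsub hclosed hv

lemma evanProj_mem_commutant (hπ : IsUnitaryRep π) : evanProj π c ∈ commutant π := by
  intro g
  ext ξ
  simp only [ContinuousLinearMap.mul_apply]
  have hmem : π g (evanProj π c ξ) ∈ evanSpace π c :=
    pi_maps_evanSpace hπ g (evanProj_apply_mem ξ)
  have horth : ∀ w ∈ evanSpace π c, (inner ℂ (π g ξ - π g (evanProj π c ξ)) w : ℂ) = 0 := by
    intro w hw
    have h1 : π g ξ - π g (evanProj π c ξ) = π g (ξ - evanProj π c ξ) := (map_sub _ _ _).symm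
    rw [h1]
    have hpg : π g = ContinuousLinearMap.adjoint (π g⁻¹) := by
      rw [← ContinuousLinearMap.star_eq_adjoint, hπ.star_pi g⁻¹, inv_inv]
    rw [hpg, ContinuousLinearMap.adjoint_inner_left]
    have hw' : π g⁻¹ w ∈ evanSpace π c := pi_maps_evanSpace hπ g⁻¹ hw
    have hu : ξ - evanProj π c ξ ∈ (evanSpace π c)ᗮ :=
      Submodule.sub_starProjection_mem_orthogonal ξ
    exact (Submodule.mem_orthogonal' _ _).mp hu _ hw'
  have := Submodule.eq_starProjection_of_mem_of_inner_eq_zero hmem horth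
  calc evanProj π c (π g ξ) = ↑(Submodule.orthogonalProjection (evanSpace π c) (π g ξ)) := rfl
  _ = π g (evanProj π c ξ) := this

lemma evanSpace_killed {q : E →L[ℂ] E}
    (h : ∀ T ∈ evanIdeal π c, ∀ η : E, q (star T η) = 0) {v : E}
    (hv : v ∈ evanSpace π c) : q v = 0 := by
  set W := ⋃ T ∈ evanIdeal π c, Set.range ((star T : E →L[ℂ] E) : E → E) with hW
  have hsub : Submodule.span ℂ W ≤ LinearMap.ker (q : E →ₗ[ℂ] E) := by
    rw [Submodule.span_le]
    rintro w hw
    simp only [hW, Set.mem_iUnion] at hw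
    obtain ⟨T, hT, η, rfl⟩ := hw
    exact h T hT η
  have hclosed : IsClosed ((LinearMap.ker (q : E →ₗ[ℂ] E) : Set E)) := by
    have : ((LinearMap.ker (q : E →ₗ[ℂ] E) : Set E)) = q ⁻¹' {0} := rfl
    rw [this]
    exact (isClosed_singleton).preimage q.continuous
  exact Submodule.topologicalClosure_minimal _ hsub hclosed hv

/-- Existence of the inverse of `1 + S` for a positive operator. -/
lemma exists_inverse (S : E →L[ℂ] E) (hpos : ∀ v : E, 0 ≤ RCLike.re ⟪S v, v⟫) :
    ∃ R : E →L[ℂ] E, R * (1 + S) = 1 ∧ (1 + S) * R = 1 ∧ ∀ v, ‖R v‖ ≤ ‖v‖ := by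
  set f : E →L[ℂ] E := 1 + S with hf
  have hre : ∀ v : E, (‖v‖ : ℝ)^2 ≤ RCLike.re ⟪f v, v⟫ := by
    intro v
    have : f v = v + S v := rfl
    rw [this, inner_add_left, map_add]
    have h1 : RCLike.re ⟪(v : E), v⟫ = ‖v‖^2 := by
      rw [inner_self_eq_norm_sq]
    linarith [hpos v, h1.ge, h1.le]
  have hlow : ∀ v : E, ‖v‖ ≤ ‖f v‖ := by
    intro v
    rcases eq_or_ne v 0 with rfl | hv
    · simp
    have h1 : (‖v‖ : ℝ)^2 ≤ ‖f v‖ * ‖v‖ := by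
      refine le_trans (hre v) ?_
      refine le_trans (RCLike.re_le_norm _) ?_
      exact norm_inner_le_norm _ _
    have hvpos : 0 < ‖v‖ := norm_pos_iff.mpr hv
    nlinarith
  have hker : f.ker = ⊥ := by
    rw [LinearMap.ker_eq_bot]
    intro a b hab
    replace hab : f a = f b := hab
    have : ‖a - b‖ ≤ ‖f (a - b)‖ := hlow _
    rw [map_sub, hab, sub_self, norm_zero] at this
    exact sub_eq_zero.mp (norm_eq_zero.mp (le_antisymm this (norm_nonneg _)))
  have hanti : AntilipschitzWith 1 f := by
    apply f.antilipschitz_of_bound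
    intro x
    simpa using hlow x
  have hclosed : IsClosed (f.range : Set E) := by
    have := hanti.isClosed_range f.uniformContinuous
    rwa [LinearMap.coe_range]
  haveI : CompleteSpace (f.range) := IsClosed.completeSpace_coe (hs := hclosed)
  have hrange : f.range = ⊤ := by
    rw [← Submodule.orthogonal_eq_bot_iff]
    rw [Submodule.eq_bot_iff]
    intro x hx
    have h0 : (inner ℂ (f x) x : ℂ) = 0 :=
      (Submodule.mem_orthogonal _ x).mp hx (f x) (LinearMap.mem_range_self _ x)
    have : (‖x‖:ℝ)^2 ≤ 0 := by
      have := hre x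
      rw [h0] at this
      simpa using this
    have : ‖x‖ = 0 := by nlinarith [norm_nonneg x]
    simpa using this
  set e := ContinuousLinearEquiv.ofBijective f hker hrange with he
  refine ⟨(e.symm : E →L[ℂ] E), ?_, ?_, ?_⟩
  · ext v
    simp only [ContinuousLinearMap.mul_apply, ContinuousLinearMap.one_apply]
    have : f v = e v := rfl
    rw [this]
    exact e.symm_apply_apply v
  · ext v
    simp only [ContinuousLinearMap.mul_apply, ContinuousLinearMap.one_apply]
    have : ∀ w, f w = e w := fun _ => rfl
    rw [this]
    exact e.apply_symm_apply v
  · intro v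
    have : ‖(e.symm : E →L[ℂ] E) v‖ ≤ ‖f ((e.symm : E →L[ℂ] E) v)‖ := hlow _
    have h2 : f ((e.symm : E →L[ℂ] E) v) = v := by
      have : ∀ w, f w = e w := fun _ => rfl
      rw [this]
      exact e.apply_symm_apply v
    rwa [h2] at this


section Sums

variable {c : G → E}

/-- Sum of `T*T` over a list of pairs. -/
def opSum (L : List ((E →L[ℂ] E) × E)) : E →L[ℂ] E :=
  (L.map fun q => star q.1 * q.1).sum

/-- Sum of `T* ζ` over a list of pairs. -/
def vecSum (L : List ((E →L[ℂ] E) × E)) : E :=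
  (L.map fun q => (star q.1 : E →L[ℂ] E) q.2).sum

lemma opSum_cons (q : (E →L[ℂ] E) × E) (L : List ((E →L[ℂ] E) × E)) :
    opSum (q :: L) = star q.1 * q.1 + opSum L := by
  simp [opSum]

lemma vecSum_cons (q : (E →L[ℂ] E) × E) (L : List ((E →L[ℂ] E) × E)) :
    vecSum (q :: L) = (star q.1 : E →L[ℂ] E) q.2 + vecSum L := by
  simp [vecSum]

lemma inner_star_mul_self (T : E →L[ℂ] E) (v : E) :
    ⟪(star T * T) v, v⟫ = (‖T v‖^2 : ℝ) := by
  rw [ContinuousLinearMap.mul_apply, ContinuousLinearMap.star_eq_adjoint,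
    ContinuousLinearMap.adjoint_inner_left]
  rw [inner_self_eq_norm_sq_to_K]
  norm_cast

lemma re_inner_opSum_nonneg (L : List ((E →L[ℂ] E) × E)) (v : E) :
    0 ≤ RCLike.re ⟪opSum L v, v⟫ := by
  induction L with
  | nil => simp [opSum]
  | cons q L ih =>
    rw [opSum_cons, ContinuousLinearMap.add_apply, inner_add_left, map_add]
    have h := inner_star_mul_self q.1 v
    rw [h]
    have hre : RCLike.re ((‖q.1 v‖^2 : ℝ) : ℂ) = ‖q.1 v‖^2 := RCLike.ofReal_re _
    rw [hre]
    positivity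

lemma sq_norm_le_re_inner_opSum {L : List ((E →L[ℂ] E) × E)}
    {q : (E →L[ℂ] E) × E} (hq : q ∈ L) (v : E) :
    ‖q.1 v‖^2 ≤ RCLike.re ⟪opSum L v, v⟫ := by
  induction L with
  | nil => simp at hq
  | cons q' L ih =>
    rw [opSum_cons, ContinuousLinearMap.add_apply, inner_add_left, map_add,
      inner_star_mul_self]
    have hre : RCLike.re ((‖q'.1 v‖^2 : ℝ) : ℂ) = ‖q'.1 v‖^2 := RCLike.ofReal_re _
    rw [hre]
    rcases List.mem_cons.mp hq with h | h
    · subst h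
      have := re_inner_opSum_nonneg L v
      linarith
    · have := ih h
      have h2 : (0:ℝ) ≤ ‖q'.1 v‖^2 := by positivity
      linarith

lemma opSum_mem_evanIdeal (hπ : IsUnitaryRep π)
    (hadd : ∀ c₁ c₂ : G → E, IsCocycle π c₁ → IsCocycle π c₂ →
      IsEvanescent π c₁ → IsEvanescent π c₂ → IsEvanescent π fun g => c₁ g + c₂ g)
    (hsmul : ∀ (T : E →L[ℂ] E) (c : G → E), T ∈ commutant π → IsCocycle π c →
      IsEvanescent π c → IsEvanescent π fun g => T (c g))
    (hc : IsCocycle π c) {L : List ((E →L[ℂ] E) × E)}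
    (hL : ∀ q ∈ L, q.1 ∈ evanIdeal π c) : opSum L ∈ evanIdeal π c := by
  induction L with
  | nil => exact evanIdeal.zero_mem
  | cons q L ih =>
    rw [opSum_cons]
    have hq := hL q (List.mem_cons_self)
    refine evanIdeal.add_mem hadd hc ?_ (ih fun q' hq' => hL q' (List.mem_cons_of_mem _ hq'))
    exact evanIdeal.lmul_mem hsmul hc (commutant.star_mem hπ hq.1) hq

lemma opSum_mul_one_sub_proj {L : List ((E →L[ℂ] E) × E)}
    (hL : ∀ q ∈ L, q.1 ∈ evanIdeal π c) : opSum L * (1 - evanProj π c) = 0 := by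
  induction L with
  | nil => simp [opSum]
  | cons q L ih =>
    rw [opSum_cons, add_mul, mul_assoc,
      evanIdeal_mul_one_sub_proj (hL q (List.mem_cons_self)), mul_zero,
      ih fun q' hq' => hL q' (List.mem_cons_of_mem _ hq'), add_zero]

/-- The key quantitative bound: `‖R (T* ζ)‖ ≤ ‖ζ‖ / √r` where `R = (1 + r S)⁻¹`
and `T*T ≤ S`. -/
lemma key_bound {S R T : E →L[ℂ] E} {r : ℝ} (hr : 0 < r)
    (hR2 : (1 + (r:ℂ) • S) * R = 1)
    (hpos : ∀ v : E, 0 ≤ RCLike.re ⟪S v, v⟫)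
    (hdom : ∀ v : E, ‖T v‖^2 ≤ RCLike.re ⟪S v, v⟫) (ζ : E) :
    ‖R ((star T : E →L[ℂ] E) ζ)‖ ≤ ‖ζ‖ / Real.sqrt r := by
  set w := (star T : E →L[ℂ] E) ζ with hw
  set u := R w with hu
  have huw : u + (r:ℂ) • S u = w := by
    have := congrArg (fun X : E →L[ℂ] E => X w) hR2
    simpa [ContinuousLinearMap.mul_apply, ContinuousLinearMap.add_apply,
      ContinuousLinearMap.one_apply, ContinuousLinearMap.smul_apply] using this
  set a := RCLike.re ⟪u, w⟫ with ha
  have hstep1 : a = ‖u‖^2 + r * RCLike.re ⟪S u, u⟫ := by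
    rw [ha, ← huw, inner_add_right, map_add, inner_smul_right]
    have h1 : RCLike.re ⟪u, (u:E)⟫ = ‖u‖^2 := inner_self_eq_norm_sq u
    have h2 : RCLike.re ((r:ℂ) * ⟪u, S u⟫) = r * RCLike.re ⟪u, S u⟫ := by
      rw [RCLike.mul_re]; simp
    have h3 : RCLike.re ⟪u, S u⟫ = RCLike.re ⟪S u, u⟫ := by
      rw [← inner_conj_symm]
      exact RCLike.conj_re _
    rw [h1, h2, h3]
  have hupos : ‖u‖^2 ≤ a := by
    have := hpos u
    nlinarith
  have htdom : r * ‖T u‖^2 ≤ a := by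
    have := hdom u
    have h4 : (0:ℝ) ≤ ‖u‖^2 := by positivity
    nlinarith
  have haT : a ≤ ‖T u‖ * ‖ζ‖ := by
    have h5 : ⟪u, w⟫ = ⟪T u, ζ⟫ := by
      rw [hw, show (star T : E →L[ℂ] E) = ContinuousLinearMap.adjoint T from
        ContinuousLinearMap.star_eq_adjoint T]
      exact ContinuousLinearMap.adjoint_inner_right T u ζ
    rw [ha, h5]
    exact le_trans (RCLike.re_le_norm _) (norm_inner_le_norm _ _)
  -- now: ‖u‖² + r‖Tu‖² ≤ a ≤ ‖Tu‖‖ζ‖  ⇒ r ‖u‖² ≤ ‖ζ‖²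
  have hkey : r * ‖u‖^2 ≤ ‖ζ‖^2 := by
    set x := ‖u‖; set t := ‖T u‖; set z := ‖ζ‖
    have hx : (0:ℝ) ≤ x := norm_nonneg _
    have ht : (0:ℝ) ≤ t := norm_nonneg _
    have hz : (0:ℝ) ≤ z := norm_nonneg _
    nlinarith [sq_nonneg (z - r * t), sq_nonneg (z/2 - r*t), hstep1, hupos, htdom, haT]
  have hsq : ‖u‖^2 ≤ (‖ζ‖ / Real.sqrt r)^2 := by
    rw [div_pow, Real.sq_sqrt hr.le]
    rw [le_div_iff₀ hr]
    linarith
  calc ‖u‖ = Real.sqrt (‖u‖^2) := (Real.sqrt_sq (norm_nonneg _)).symm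
  _ ≤ Real.sqrt ((‖ζ‖ / Real.sqrt r)^2) := Real.sqrt_le_sqrt hsq
  _ = ‖ζ‖ / Real.sqrt r := Real.sqrt_sq (by positivity)

lemma vecSum_bound {S R : E →L[ℂ] E} {r : ℝ} (hr : 0 < r)
    (hR2 : (1 + (r:ℂ) • S) * R = 1)
    (hpos : ∀ v : E, 0 ≤ RCLike.re ⟪S v, v⟫)
    {L : List ((E →L[ℂ] E) × E)}
    (hdom : ∀ q ∈ L, ∀ v : E, ‖q.1 v‖^2 ≤ RCLike.re ⟪S v, v⟫) :
    ‖R (vecSum L)‖ ≤ (L.map fun q => ‖q.2‖).sum / Real.sqrt r := by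
  induction L with
  | nil => simp [vecSum]
  | cons q L ih =>
    rw [vecSum_cons, map_add]
    have h1 : ‖R ((star q.1 : E →L[ℂ] E) q.2)‖ ≤ ‖q.2‖ / Real.sqrt r :=
      key_bound hr hR2 hpos (hdom q (List.mem_cons_self)) q.2
    have h2 := ih fun q' hq' => hdom q' (List.mem_cons_of_mem _ hq')
    calc ‖R ((star q.1 : E →L[ℂ] E) q.2) + R (vecSum L)‖ ≤ ‖R ((star q.1 : E →L[ℂ] E) q.2)‖ + ‖R (vecSum L)‖ :=
      norm_add_le _ _
    _ ≤ ‖q.2‖ / Real.sqrt r + (L.map fun q => ‖q.2‖).sum / Real.sqrt r := by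
      exact add_le_add h1 h2
    _ = ((q :: L).map fun q => ‖q.2‖).sum / Real.sqrt r := by
      rw [List.map_cons, List.sum_cons, add_div]

end Sums

section Approx

variable {c : G → E}

lemma smul_inner_pos {S : E →L[ℂ] E} (r : ℝ) (hr : 0 ≤ r)
    (hpos : ∀ v : E, 0 ≤ RCLike.re ⟪S v, v⟫) (v : E) :
    0 ≤ RCLike.re ⟪((r:ℂ) • S) v, v⟫ := by
  rw [ContinuousLinearMap.smul_apply, inner_smul_left, Complex.conj_ofReal]
  have h : RCLike.re ((r:ℂ) * ⟪S v, v⟫) = r * RCLike.re ⟪S v, v⟫ := by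
    rw [RCLike.mul_re]; simp
  rw [h]
  exact mul_nonneg hr (hpos v)

lemma evanProj_approx (hπ : IsUnitaryRep π)
    (hadd : ∀ c₁ c₂ : G → E, IsCocycle π c₁ → IsCocycle π c₂ →
      IsEvanescent π c₁ → IsEvanescent π c₂ → IsEvanescent π fun g => c₁ g + c₂ g)
    (hsmul : ∀ (T : E →L[ℂ] E) (c : G → E), T ∈ commutant π → IsCocycle π c →
      IsEvanescent π c → IsEvanescent π fun g => T (c g))
    (hc : IsCocycle π c)
    {n : ℕ} (ξv : Fin n → E) {δ : ℝ} (hδ : 0 < δ) :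
    ∃ A' : E →L[ℂ] E, A' ∈ evanIdeal π c ∧ A' * (1 - evanProj π c) = 0 ∧
      ∀ i, ‖A' (ξv i) - evanProj π c (ξv i)‖ ≤ δ := by
  -- Step A: approximate each projected vector by an explicit combination
  have hex : ∀ i : Fin n, ∃ L : List ((E →L[ℂ] E) × E),
      (∀ q ∈ L, q.1 ∈ evanIdeal π c) ∧
      ‖evanProj π c (ξv i) - vecSum L‖ ≤ δ / 2 := by
    intro i
    set W := ⋃ T ∈ evanIdeal π c, Set.range ((star T : E →L[ℂ] E) : E → E) with hWdef
    have hmem : evanProj π c (ξv i) ∈ closure ((Submodule.span ℂ W : Submodule ℂ E) : Set E) := by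
      have h := evanProj_apply_mem (π := π) (c := c) (ξv i)
      have hcoe : ((evanSpace π c : Submodule ℂ E) : Set E)
          = closure ((Submodule.span ℂ W : Submodule ℂ E) : Set E) :=
        Submodule.topologicalClosure_coe _
      rw [← hcoe]
      exact h
    obtain ⟨w, hwspan, hwdist⟩ := Metric.mem_closure_iff.mp hmem (δ/2) (half_pos hδ)
    rw [SetLike.mem_coe] at hwspan
    obtain ⟨k, f, gfun, hsum⟩ := Submodule.mem_span_set'.mp hwspan
    have hWrep : ∀ j : Fin k, ∃ T, T ∈ evanIdeal π c ∧
        ∃ η, (star T : E →L[ℂ] E) η = (gfun j : E) := by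
      intro j
      have h2 : (gfun j : E) ∈ ⋃ T ∈ evanIdeal π c,
          Set.range ((star T : E →L[ℂ] E) : E → E) := (gfun j).2
      simp only [Set.mem_iUnion, Set.mem_range] at h2
      obtain ⟨T, hT, η, hη⟩ := h2
      exact ⟨T, hT, η, hη⟩
    choose T hT η hη using hWrep
    refine ⟨List.ofFn (fun j => (T j, f j • η j)), ?_, ?_⟩
    · intro q hq
      obtain ⟨j, hj⟩ := (List.mem_ofFn).mp hq
      rw [← hj]
      exact hT j
    · have hvs : vecSum (List.ofFn fun j => (T j, f j • η j)) = w := by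
        rw [vecSum, List.map_ofFn, List.sum_ofFn]
        rw [← hsum]
        refine Finset.sum_congr rfl fun j _ => ?_
        show (star (T j) : E →L[ℂ] E) (f j • η j) = f j • (gfun j : E)
        rw [_root_.map_smul, hη j]
      rw [hvs, ← dist_eq_norm]
      exact hwdist.le
  choose Ldata hL1 hL2 using hex
  -- Step B: the combined positive operator
  set L : List ((E →L[ℂ] E) × E) := (List.finRange n).flatMap Ldata with hLdef
  have hLall : ∀ q ∈ L, q.1 ∈ evanIdeal π c := by
    intro q hq
    rw [hLdef, List.mem_flatMap] at hq
    obtain ⟨i, _, hqi⟩ := hq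
    exact hL1 i q hqi
  set S := opSum L with hSdef
  have hSJ : S ∈ evanIdeal π c := opSum_mem_evanIdeal hπ hadd hsmul hc hLall
  have hSpos : ∀ v, 0 ≤ RCLike.re ⟪S v, v⟫ := re_inner_opSum_nonneg L
  have hSkill : S * (1 - evanProj π c) = 0 := opSum_mul_one_sub_proj hLall
  -- Step C: constants
  set Ci : Fin n → ℝ := fun i => ((Ldata i).map fun q => ‖q.2‖).sum with hCidef
  have hCi0 : ∀ i, 0 ≤ Ci i := by
    intro i
    apply List.sum_nonneg
    intro x hx
    rw [List.mem_map] at hx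
    obtain ⟨q, _, rfl⟩ := hx
    exact norm_nonneg _
  set C : ℝ := ∑ i, Ci i with hCdef
  have hC0 : 0 ≤ C := Finset.sum_nonneg fun i _ => hCi0 i
  have hCiC : ∀ i, Ci i ≤ C := fun i =>
    Finset.single_le_sum (fun j _ => hCi0 j) (Finset.mem_univ i)
  set r : ℝ := (2 * C / δ)^2 + 1 with hrdef
  have hr : 0 < r := by positivity
  have hsqrtr : 0 < Real.sqrt r := Real.sqrt_pos.mpr hr
  have hCr : C / Real.sqrt r ≤ δ / 2 := by
    have h1 : 2 * C / δ ≤ Real.sqrt r := by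
      have h2 : Real.sqrt ((2 * C / δ)^2) ≤ Real.sqrt r :=
        Real.sqrt_le_sqrt (by rw [hrdef]; linarith)
      rwa [Real.sqrt_sq (by positivity)] at h2
    have h3 : C / Real.sqrt r ≤ δ/2 ↔ C ≤ δ/2 * Real.sqrt r := div_le_iff₀ hsqrtr
    rw [h3]
    rw [div_le_iff₀ hδ] at h1
    nlinarith
  -- Step D: the inverse
  obtain ⟨R, hR1, hR2, hRn⟩ := exists_inverse ((r:ℂ) • S) (smul_inner_pos r hr.le hSpos)
  -- Step E: the approximant
  have hA'eq : (1 : E →L[ℂ] E) - R = R * ((r:ℂ) • S) := by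
    have h := hR1
    rw [mul_add, mul_one] at h
    exact (eq_sub_of_add_eq' h).symm
  have hrS : (r:ℂ) • S ∈ evanIdeal π c := by
    have h1 : ((r:ℂ) • (1 : E →L[ℂ] E)) ∈ commutant π :=
      commutant.smul_mem _ commutant.one_mem
    have h2 := evanIdeal.lmul_mem hsmul hc h1 hSJ
    simpa [smul_mul_assoc, one_mul] using h2
  have hRcomm : R ∈ commutant π :=
    commutant.inv_mem (commutant.add_mem commutant.one_mem
      (commutant.smul_mem _ hSJ.1)) hR1 hR2
  have hA'J : (1 : E →L[ℂ] E) - R ∈ evanIdeal π c := by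
    rw [hA'eq]
    exact evanIdeal.lmul_mem hsmul hc hRcomm hrS
  have hA'kill : ((1 : E →L[ℂ] E) - R) * (1 - evanProj π c) = 0 := by
    rw [hA'eq, mul_assoc, smul_mul_assoc, hSkill, smul_zero, mul_zero]
  refine ⟨1 - R, hA'J, hA'kill, ?_⟩
  intro i
  set p := evanProj π c with hpdef
  set A' : E →L[ℂ] E := 1 - R with hA'def
  have hsplit : A' (ξv i) = A' (p (ξv i)) := by
    have h0 : (A' * (1 - p)) (ξv i) = A' (ξv i) - A' (p (ξv i)) := by
      rw [ContinuousLinearMap.mul_apply]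
      rw [show (1 - p) (ξv i) = ξv i - p (ξv i) from by
        rw [ContinuousLinearMap.sub_apply, ContinuousLinearMap.one_apply]]
      rw [map_sub]
    have h6 : A' (ξv i) - A' (p (ξv i)) = 0 := by rw [← h0, hA'kill]; rfl
    exact sub_eq_zero.mp h6
  have hA'p : A' (p (ξv i)) - p (ξv i) = -(R (p (ξv i))) := by
    have h5 : A' (p (ξv i)) = p (ξv i) - R (p (ξv i)) := by
      rw [hA'def, ContinuousLinearMap.sub_apply, ContinuousLinearMap.one_apply]
    rw [h5]
    abel
  rw [hsplit, hA'p, norm_neg]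
  -- bound ‖R (p ξ)‖
  set wi := vecSum (Ldata i) with hwidef
  have hdomi : ∀ q ∈ Ldata i, ∀ v : E, ‖q.1 v‖^2 ≤ RCLike.re ⟪S v, v⟫ := by
    intro q hq v
    have hqL : q ∈ L := by
      rw [hLdef, List.mem_flatMap]
      exact ⟨i, List.mem_finRange i, hq⟩
    exact sq_norm_le_re_inner_opSum hqL v
  have hbound1 : ‖R wi‖ ≤ Ci i / Real.sqrt r := vecSum_bound hr hR2 hSpos hdomi
  have hRsplit : R (p (ξv i)) = R (p (ξv i) - wi) + R wi := by
    rw [map_sub]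
    abel
  calc ‖R (p (ξv i))‖ = ‖R (p (ξv i) - wi) + R wi‖ := by rw [← hRsplit]
  _ ≤ ‖R (p (ξv i) - wi)‖ + ‖R wi‖ := norm_add_le _ _
  _ ≤ ‖p (ξv i) - wi‖ + Ci i / Real.sqrt r := add_le_add (hRn _) hbound1
  _ ≤ δ / 2 + C / Real.sqrt r := by
    refine add_le_add (hL2 i) ?_
    gcongr
    exact hCiC i
  _ ≤ δ / 2 + δ / 2 := add_le_add le_rfl hCr
  _ = δ := by ring

end Approx

end AuxEvan

/-- If the set of evanescent cocycles is a `π(G)'`-submodule of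
`Z¹(G,π)`, then every cocycle admits a unique decomposition into an evanescent part and
an irreducible part. -/
theorem unique_decomposition_of_module
    (G : Type) [Group G] [TopologicalSpace G] [IsTopologicalGroup G]
    [LocallyCompactSpace G] [SecondCountableTopology G]
    (H : Type) [NormedAddCommGroup H] [InnerProductSpace ℂ H] [CompleteSpace H]
    [TopologicalSpace.SeparableSpace H]
    (π : G →* (H →L[ℂ] H)) (hπ : IsUnitaryRep π)
    (hadd : ∀ c₁ c₂ : G → H, IsCocycle π c₁ → IsCocycle π c₂ →
      IsEvanescent π c₁ → IsEvanescent π c₂ → IsEvanescent π fun g => c₁ g + c₂ g)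
    (hsmul : ∀ (T : H →L[ℂ] H) (c : G → H), T ∈ commutant π → IsCocycle π c →
      IsEvanescent π c → IsEvanescent π fun g => T (c g))
    (c : G → H) (hc : IsCocycle π c) :
    ∃! p : H →L[ℂ] H, p ∈ commutant π ∧ IsProjection p ∧
      ProjIsEvanescent π c p ∧ ProjIsIrreducible π c (1 - p) := by
  classical
  set p : H →L[ℂ] H := evanProj π c with hpdef
  have hpcomm : p ∈ commutant π := evanProj_mem_commutant hπ
  have hidem : p * p = p := evanProj_idem
  have hpsa : IsSelfAdjoint p := evanProj_isSelfAdjoint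
  -- Irreducibility of `(1-p)·c`
  have hirr : ProjIsIrreducible π c (1 - p) := by
    unfold ProjIsIrreducible
    ext T
    simp only [Set.mem_singleton_iff]
    constructor
    · rintro ⟨hTcomm, h1T, hT1, ξ0, hξ0, hcob⟩
      have hTJ : T ∈ evanIdeal π c := evanIdeal.coboundary_mem hTcomm ⟨ξ0, hcob⟩
      have hkill : T * (1 - p) = 0 := evanIdeal_mul_one_sub_proj hTJ
      rw [← hT1, hkill]
    · rintro rfl
      exact ⟨commutant.zero_mem, mul_zero _, zero_mul _, 0, map_zero _,
        fun g => by simp⟩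
  -- Evanescence of `p·c`
  have hev : ProjIsEvanescent π c p := by
    rintro A ⟨hAcomm, hpA, hAp⟩
    rw [mem_wotClosure_iff]
    intro Φ ε hε
    set lst := Φ.toList with hlst
    set n := lst.length with hn
    set ξv : Fin n → H := fun i => (lst.get i).1 with hξv
    set CA : ℝ := ‖p * A‖ with hCA
    have hCA0 : 0 ≤ CA := norm_nonneg _
    set Y : ℝ := ∑ φ ∈ Φ, ‖φ.2‖ with hY
    have hY0 : 0 ≤ Y := Finset.sum_nonneg fun φ _ => norm_nonneg _
    have hYle : ∀ φ ∈ Φ, ‖φ.2‖ ≤ Y := fun φ hφ =>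
      Finset.single_le_sum (f := fun ψ : H × (H →L[ℂ] ℂ) => ‖ψ.2‖)
        (fun ψ _ => norm_nonneg _) hφ
    have hden : (0:ℝ) < 2 * (CA + 1) * (Y + 1) := by positivity
    set δ : ℝ := ε / (2 * (CA + 1) * (Y + 1)) with hδdef
    have hδ : 0 < δ := div_pos hε hden
    obtain ⟨A', hA'J, hA'kill, hA'close⟩ := evanProj_approx hπ hadd hsmul hc ξv hδ
    have hAA' : A * A' ∈ evanIdeal π c := evanIdeal.lmul_mem hsmul hc hAcomm hA'J
    set T₀ : H →L[ℂ] H := p * (A * A') with hT₀def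
    have hT₀J : T₀ ∈ evanIdeal π c := evanIdeal.lmul_mem hsmul hc hpcomm hAA'
    have hpT₀ : p * T₀ = T₀ := by rw [hT₀def, ← mul_assoc, hidem]
    have hT₀kill : T₀ * (1 - p) = 0 := by
      rw [hT₀def, mul_assoc, mul_assoc, hA'kill, mul_zero, mul_zero]
    have hT₀p : T₀ * p = T₀ := by
      have h := hT₀kill
      rw [mul_sub, mul_one] at h
      exact (sub_eq_zero.mp h).symm
    have hApt : ∀ x : H, A x = (p * A) (p x) := by
      intro x
      have h1 : A (p x) = A x := by
        have := congrArg (fun S : H →L[ℂ] H => S x) hAp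
        simpa [ContinuousLinearMap.mul_apply] using this
      have h2 : p (A (p x)) = A (p x) := by
        have := congrArg (fun S : H →L[ℂ] H => S (p x)) hpA
        simpa [ContinuousLinearMap.mul_apply] using this
      calc A x = A (p x) := h1.symm
      _ = p (A (p x)) := h2.symm
      _ = (p * A) (p x) := (ContinuousLinearMap.mul_apply _ _ _).symm
    have hTAi : ∀ i : Fin n, ‖T₀ (ξv i) - A (ξv i)‖ ≤ CA * δ := by
      intro i
      have h3 : T₀ (ξv i) = (p * A) (A' (ξv i)) := by
        rw [hT₀def]
        simp [ContinuousLinearMap.mul_apply]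
      rw [h3, hApt (ξv i), ← map_sub]
      calc ‖(p * A) (A' (ξv i) - p (ξv i))‖
          ≤ ‖p * A‖ * ‖A' (ξv i) - p (ξv i)‖ := ContinuousLinearMap.le_opNorm _ _
      _ ≤ CA * δ := by
        refine mul_le_mul_of_nonneg_left ?_ hCA0
        exact hA'close i
    have hevT₀ : (1 : H →L[ℂ] H) ∈ wotClosure ℂ (reductionIdeal π fun g => T₀ (c g)) :=
      hT₀J.2 commutant.one_mem
    rw [mem_wotClosure_iff] at hevT₀
    obtain ⟨S', hS'mem, hS'close⟩ := hevT₀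
      (Φ.image fun φ => (T₀ φ.1, φ.2.comp p)) (ε/2) (half_pos hε)
    obtain ⟨hS'comm, ξ1, hξ1cob⟩ := hS'mem
    refine ⟨p * (S' * T₀), ⟨?_, ?_, ?_, ?_⟩, ?_⟩
    · exact commutant.mul_mem hpcomm (commutant.mul_mem hS'comm hT₀J.1)
    · rw [← mul_assoc, hidem]
    · rw [mul_assoc, mul_assoc, hT₀p]
    · refine ⟨p ξ1, ?_, ?_⟩
      · have := congrArg (fun S : H →L[ℂ] H => S ξ1) hidem
        simpa [ContinuousLinearMap.mul_apply] using this
      · intro g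
        have h4 : (p * (S' * T₀)) (c g) = p (S' (T₀ (c g))) := by
          simp [ContinuousLinearMap.mul_apply]
        have hco := hξ1cob g
        dsimp only at hco
        rw [h4, hco, map_sub, commutant.apply_commute hpcomm]
    · intro φ hφ
      obtain ⟨i, hi⟩ : ∃ i : Fin n, ξv i = φ.1 := by
        have hmem : φ ∈ lst := Finset.mem_toList.mpr hφ
        obtain ⟨i, hi⟩ := List.mem_iff_get.mp hmem
        exact ⟨i, by rw [hξv]; simp only; rw [hi]⟩
      have hfirst : ‖φ.2 (A φ.1 - T₀ φ.1)‖ ≤ ε/2 := by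
        calc ‖φ.2 (A φ.1 - T₀ φ.1)‖ ≤ ‖φ.2‖ * ‖A φ.1 - T₀ φ.1‖ :=
          ContinuousLinearMap.le_opNorm _ _
        _ = ‖φ.2‖ * ‖T₀ φ.1 - A φ.1‖ := by rw [norm_sub_rev]
        _ ≤ Y * (CA * δ) := by
          refine mul_le_mul (hYle φ hφ) ?_ (norm_nonneg _) hY0
          rw [← hi]
          exact hTAi i
        _ ≤ ε/2 := by
          have hCA1 : CA + 1 ≠ 0 := by positivity
          have hY1 : Y + 1 ≠ 0 := by positivity
          have h2 : ((CA + 1) * (Y + 1)) * δ = ε/2 := by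
            rw [hδdef]; field_simp
          have hle : Y * CA ≤ (CA + 1) * (Y + 1) := by nlinarith
          nlinarith [mul_le_mul_of_nonneg_right hle hδ.le, h2]
      have hsecond : ‖φ.2 (T₀ φ.1 - (p * (S' * T₀)) φ.1)‖ < ε/2 := by
        have h6 : T₀ φ.1 = p (T₀ φ.1) := by
          have := congrArg (fun S : H →L[ℂ] H => S φ.1) hpT₀
          simpa [ContinuousLinearMap.mul_apply] using this.symm
        have h5 : T₀ φ.1 - (p * (S' * T₀)) φ.1 = p (T₀ φ.1 - S' (T₀ φ.1)) := by
          simp only [ContinuousLinearMap.mul_apply]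
          rw [map_sub, ← h6]
        have h7 := hS'close (T₀ φ.1, φ.2.comp p) (Finset.mem_image_of_mem _ hφ)
        have h8 : ‖φ.2 (T₀ φ.1 - (p * (S' * T₀)) φ.1)‖
            = ‖(φ.2.comp p) (T₀ φ.1 - S' (T₀ φ.1))‖ := by
          rw [h5]
          rfl
        rw [h8]
        simpa only [ContinuousLinearMap.one_apply] using h7
      have hsplit : A φ.1 - (p * (S' * T₀)) φ.1
          = (A φ.1 - T₀ φ.1) + (T₀ φ.1 - (p * (S' * T₀)) φ.1) :=
        (sub_add_sub_cancel _ _ _).symm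
      calc ‖φ.2 (A φ.1 - (p * (S' * T₀)) φ.1)‖
          = ‖φ.2 (A φ.1 - T₀ φ.1) + φ.2 (T₀ φ.1 - (p * (S' * T₀)) φ.1)‖ := by
            rw [hsplit, map_add]
      _ ≤ ‖φ.2 (A φ.1 - T₀ φ.1)‖ + ‖φ.2 (T₀ φ.1 - (p * (S' * T₀)) φ.1)‖ :=
        norm_add_le _ _
      _ < ε := by linarith
  -- Uniqueness
  have huniq : ∀ q : H →L[ℂ] H, q ∈ commutant π → IsProjection q →
      ProjIsEvanescent π c q → ProjIsIrreducible π c (1 - q) → q = p := by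
    intro q hqcomm hqproj hqev hqirr
    have hqidem : q * q = q := hqproj.2
    have hqsa : star q = q := hqproj.1
    have h1qidem : ((1 : H →L[ℂ] H) - q) * (1 - q) = 1 - q := by
      have h : ((1 : H →L[ℂ] H) - q) * (1 - q) = 1 - q - q + q * q := by noncomm_ring
      rw [h, hqidem]
      abel
    have h1qsa : IsSelfAdjoint ((1 : H →L[ℂ] H) - q) := by
      rw [IsSelfAdjoint, star_sub, star_one, hqsa]
    have h1qcomm : (1 : H →L[ℂ] H) - q ∈ commutant π :=
      commutant.sub_mem commutant.one_mem hqcomm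
    -- (i) `q ∈ evanIdeal`
    have hqJ : q ∈ evanIdeal π c := by
      refine ⟨hqcomm, ?_⟩
      intro A hAcomm
      rw [mem_wotClosure_iff]
      intro Φ ε hε
      have hqmem : q ∈ wotClosure ℂ (projReductionIdeal π c q) :=
        hqev ⟨hqcomm, hqidem, hqidem⟩
      rw [mem_wotClosure_iff] at hqmem
      obtain ⟨B', hB'mem, hB'close⟩ := hqmem (Φ.image fun φ => (φ.1, φ.2.comp A)) ε hε
      obtain ⟨hB'comm, hqB', hB'q, ξ1, hξ1, hξ1cob⟩ := hB'mem
      refine ⟨A * B' + A - A * q, ⟨?_, ?_⟩, ?_⟩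
      · exact commutant.sub_mem
          (commutant.add_mem (commutant.mul_mem hAcomm hB'comm) hAcomm)
          (commutant.mul_mem hAcomm hqcomm)
      · refine ⟨A ξ1, fun g => ?_⟩
        have hqq : q (q (c g)) = q (c g) := by
          have := congrArg (fun S : H →L[ℂ] H => S (c g)) hqidem
          simpa [ContinuousLinearMap.mul_apply] using this
        have hB'qc : B' (q (c g)) = B' (c g) := by
          have := congrArg (fun S : H →L[ℂ] H => S (c g)) hB'q
          simpa [ContinuousLinearMap.mul_apply] using this
        show (A * B' + A - A * q) (q (c g)) = A ξ1 - π g (A ξ1)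
        rw [ContinuousLinearMap.sub_apply, ContinuousLinearMap.add_apply,
          ContinuousLinearMap.mul_apply, ContinuousLinearMap.mul_apply, hB'qc, hqq,
          add_sub_cancel_right, hξ1cob g, map_sub, commutant.apply_commute hAcomm]
      · intro φ hφ
        have h7 := hB'close (φ.1, φ.2.comp A) (Finset.mem_image_of_mem _ hφ)
        have h8 : A φ.1 - (A * B' + A - A * q) φ.1 = A (q φ.1 - B' φ.1) := by
          simp only [ContinuousLinearMap.sub_apply, ContinuousLinearMap.add_apply,
            ContinuousLinearMap.mul_apply]
          rw [map_sub]
          abel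
        rw [h8]
        exact h7
    -- (ii) every element of `evanIdeal` is killed by `1 - q` on the right
    have hBzero : ∀ B ∈ evanIdeal π c, (1 - q) * B = B → B * (1 - q) = B →
        B = (0 : H →L[ℂ] H) := by
      intro B hBJ h1B hB1
      have h1cl := hBJ.2 commutant.one_mem
      rw [mem_wotClosure_iff] at h1cl
      have hX : ∀ S' ∈ reductionIdeal π fun g => B (c g), (1 - q) * (S' * B) = 0 := by
        intro S' hS'
        obtain ⟨hS'comm, ξ2, hξ2⟩ := hS'
        have hmem : (1 - q) * (S' * B) ∈ projReductionIdeal π c (1 - q) := by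
          refine ⟨commutant.mul_mem h1qcomm (commutant.mul_mem hS'comm hBJ.1),
            ?_, ?_, ?_⟩
          · rw [← mul_assoc, h1qidem]
          · rw [mul_assoc, mul_assoc, hB1]
          · refine ⟨(1 - q) ξ2, ?_, fun g => ?_⟩
            · have := congrArg (fun S : H →L[ℂ] H => S ξ2) h1qidem
              simpa [ContinuousLinearMap.mul_apply] using this
            · show ((1 - q) * (S' * B)) (c g) = _
              simp only [ContinuousLinearMap.mul_apply]
              have hco2 := hξ2 g
              dsimp only at hco2
              rw [hco2, map_sub, commutant.apply_commute h1qcomm]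
        rw [hqirr] at hmem
        exact hmem
      have hval : ∀ x : H, (1 - q) (B x) = 0 := by
        intro x
        set v := (1 - q) (B x) with hv
        by_contra hne
        have hvpos : 0 < ‖v‖^2 := pow_pos (norm_pos_iff.mpr hne) 2
        obtain ⟨S', hS'mem, hS'close⟩ :=
          h1cl {(B x, (innerSL ℂ v).comp (1 - q))} (‖v‖^2) hvpos
        have h9 := hS'close (B x, (innerSL ℂ v).comp (1 - q)) (Finset.mem_singleton_self _)
        have h11 : (1 - q) (S' (B x)) = 0 := by
          have h12 := hX S' hS'mem
          have := congrArg (fun X : H →L[ℂ] H => X x) h12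
          simpa [ContinuousLinearMap.mul_apply] using this
        have hbx : (1 - q) ((1 : H →L[ℂ] H) (B x) - S' (B x)) = v := by
          rw [ContinuousLinearMap.one_apply, map_sub, h11, sub_zero]
        have h10 : ((innerSL ℂ v).comp (1 - q)) ((1 : H →L[ℂ] H) (B x) - S' (B x))
            = (inner ℂ v v : ℂ) := by
          rw [ContinuousLinearMap.comp_apply, hbx]
          simp [innerSL_apply_apply]
        rw [h10] at h9
        have h12 : ‖(inner ℂ v v : ℂ)‖ = ‖v‖^2 := by
          rw [inner_self_eq_norm_sq_to_K, norm_pow, RCLike.norm_ofReal, abs_norm]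
        rw [h12] at h9
        exact lt_irrefl _ h9
      ext x
      have h13 : B x = (1 - q) (B x) := by
        have := congrArg (fun X : H →L[ℂ] H => X x) h1B
        simpa [ContinuousLinearMap.mul_apply] using this.symm
      rw [h13, hval x]
      simp
    have hrmul1q : ∀ X ∈ evanIdeal π c, X * (1 - q) ∈ evanIdeal π c := by
      intro X hX
      have hXq : X * q ∈ evanIdeal π c := by
        refine ⟨commutant.mul_mem hX.1 hqcomm, ?_⟩
        have := hsmul X _ hX.1 (hc.clm hqcomm) hqJ.2
        simpa [ContinuousLinearMap.mul_apply] using this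
      have hneg : (-1 : ℂ) • (X * q) ∈ evanIdeal π c := by
        have h1 : ((-1 : ℂ) • (1 : H →L[ℂ] H)) ∈ commutant π :=
          commutant.smul_mem _ commutant.one_mem
        have h2 := evanIdeal.lmul_mem hsmul hc h1 hXq
        simpa [smul_mul_assoc, one_mul] using h2
      have hadd' := evanIdeal.add_mem hadd hc hX hneg
      have heq : X + (-1 : ℂ) • (X * q) = X * (1 - q) := by
        rw [neg_smul, one_smul, mul_sub, mul_one, ← sub_eq_add_neg]
      rwa [heq] at hadd'
    have hTkill : ∀ T ∈ evanIdeal π c, T * (1 - q) = 0 := by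
      intro T hT
      have hstarT : star T ∈ commutant π := commutant.star_mem hπ hT.1
      have hsTT : star T * T ∈ evanIdeal π c := evanIdeal.lmul_mem hsmul hc hstarT hT
      set B : H →L[ℂ] H := (1 - q) * ((star T * T) * (1 - q)) with hBdef
      have hBJ : B ∈ evanIdeal π c :=
        evanIdeal.lmul_mem hsmul hc h1qcomm (hrmul1q _ hsTT)
      have h1B : (1 - q) * B = B := by rw [hBdef, ← mul_assoc, h1qidem]
      have hB1 : B * (1 - q) = B := by
        rw [hBdef, mul_assoc, mul_assoc, h1qidem]
      have hB0 : B = 0 := hBzero B hBJ h1B hB1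
      have hu : ∀ ξ : H, T ((1 - q) ξ) = 0 := by
        intro ξ
        set u := (1 - q) ξ with hu'
        have h15 : (1 - q) ((star T * T) u) = 0 := by
          have h14 : (1 - q) ((star T * T) u) = B ξ := rfl
          rw [h14, hB0]
          rfl
        have h16 : (inner ℂ ((star T * T) u) u : ℂ) = ((‖T u‖^2 : ℝ) : ℂ) :=
          inner_star_mul_self T u
        have hadj : ContinuousLinearMap.adjoint ((1 : H →L[ℂ] H) - q) = 1 - q := by
          rw [← ContinuousLinearMap.star_eq_adjoint]
          exact h1qsa
        have h17 : (inner ℂ ((star T * T) u) u : ℂ)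
            = (inner ℂ ((1 - q) ((star T * T) u)) ξ : ℂ) := by
          calc (inner ℂ ((star T * T) u) u : ℂ)
              = (inner ℂ ((star T * T) u) ((1 - q) ξ) : ℂ) := rfl
          _ = (inner ℂ (ContinuousLinearMap.adjoint ((1 : H →L[ℂ] H) - q)
                ((star T * T) u)) ξ : ℂ) :=
            (ContinuousLinearMap.adjoint_inner_left _ _ _).symm
          _ = (inner ℂ ((1 - q) ((star T * T) u)) ξ : ℂ) := by rw [hadj]
        rw [h15] at h17
        rw [h16] at h17
        have h18 : ((‖T u‖^2 : ℝ) : ℂ) = 0 := by rw [h17, inner_zero_left]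
        have h19 : ‖T u‖^2 = 0 := by exact_mod_cast h18
        have h20 : ‖T u‖ = 0 := by
          nlinarith [norm_nonneg (T u), sq_nonneg (‖T u‖)]
        exact norm_eq_zero.mp h20
      ext ξ
      simp only [ContinuousLinearMap.mul_apply, ContinuousLinearMap.zero_apply]
      exact hu ξ
    -- (iii) combine
    have h1 : q * p = q := by
      have hk : q * (1 - p) = 0 := evanIdeal_mul_one_sub_proj hqJ
      rw [mul_sub, mul_one] at hk
      exact (sub_eq_zero.mp hk).symm
    have h2 : q * p = p := by
      have hkills : ∀ T' ∈ evanIdeal π c, ∀ η : H,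
          ((1 : H →L[ℂ] H) - q) ((star T' : H →L[ℂ] H) η) = 0 := by
        intro T' hT' η
        have h21 := hTkill T' hT'
        have h22 := congrArg star h21
        rw [star_mul, star_zero] at h22
        rw [show star ((1 : H →L[ℂ] H) - q) = 1 - q from h1qsa] at h22
        have := congrArg (fun X : H →L[ℂ] H => X η) h22
        simpa [ContinuousLinearMap.mul_apply] using this
      have h23 : ∀ ξ : H, ((1 : H →L[ℂ] H) - q) (p ξ) = 0 := fun ξ =>
        evanSpace_killed hkills (evanProj_apply_mem ξ)
      have h24 : ((1 : H →L[ℂ] H) - q) * p = 0 := by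
        ext ξ
        simpa [ContinuousLinearMap.mul_apply] using h23 ξ
      rw [sub_mul, one_mul] at h24
      exact (sub_eq_zero.mp h24).symm
    rw [← h1, h2]
  exact ⟨p, ⟨hpcomm, ⟨hpsa, hidem⟩, hev, hirr⟩,
    fun q hq => huniq q hq.1 hq.2.1 hq.2.2.1 hq.2.2.2⟩

end Evan
end
end
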